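/- (Truncated second-moment bound for no-jump increments.) Fix T > 0, β ∈ ℝ, θ > 0, m > 0, and ω ∈ (0, 1/2). For each n ≥ 1 let Z_n ~ N(β T/n, θ T/n) and η_n = m n^{-ω}. Then for every k ∈ ℕ, n^k · E[ Z_n² · 1(|Z_n| > η_n) ] → 0 as n → ∞. In particular, the total contribution of the n − K no-jump increments satisfies Σ_{i ∉ {J}} E[Z_i² 1(|Z_i| > η_n)] = o(n^{-1/2}). -/

import Mathlib

/-!
On `{|x| > η}` one has `x² ≤ x^(2p+2) / η^(2p)`, so the truncated second moment is at most
`η^(-2p) E[Z^(2p+2)]`. Writing `Z = βT/n + √(θT/n) Y` with `Y` standard normal gives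
`E[Z^(2p+2)] = O(n^(-(p+1)))`, while `η_n^(-2p) = m^(-2p) n^(2pw)`. Since `w < 1/2`, the exponent
`2pw - (p+1)` tends to `-∞` with `p`, which beats any polynomial factor `n^k`.
-/

open MeasureTheory ProbabilityTheory Filter Real
open scoped NNReal

lemma integrable_pow_gaussianReal (μ : ℝ) (v : ℝ≥0) (j : ℕ) :
    Integrable (fun x : ℝ => x ^ j) (gaussianReal μ v) :=
  (memLp_id_gaussianReal (μ := μ) (v := v) j).integrable_norm_pow'.mono' (by fun_prop)
    (ae_of_all _ fun x => by simp)

lemma integrable_abs_add_one_pow_gaussianReal (μ : ℝ) (v : ℝ≥0) (j : ℕ) :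
    Integrable (fun y : ℝ => (|y| + 1) ^ j) (gaussianReal μ v) :=
  ((memLp_id_gaussianReal (μ := μ) (v := v) j).norm.add
    (memLp_const 1)).integrable_norm_pow'.mono' (by fun_prop) (ae_of_all _ fun x => by simp)

lemma gaussianReal_eq_map_std (μ : ℝ) (v : ℝ≥0) :
    gaussianReal μ v = (gaussianReal 0 1).map (fun y => √v * y + μ) := by
  have hscale : (gaussianReal 0 1).map (fun y => √v * y) = gaussianReal 0 v := by
    rw [gaussianReal_map_const_mul, mul_zero, mul_one]
    congr
    exact sq_sqrt v.coe_nonneg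
  change _ = (gaussianReal 0 1).map ((fun x => x + μ) ∘ fun y => √v * y)
  rw [← Measure.map_map (measurable_add_const μ) (measurable_const_mul _), hscale,
    gaussianReal_map_add_const, zero_add]

lemma abs_mul_add_le_mul_abs_add_one (c μ y : ℝ) (hc : 0 ≤ c) :
    |c * y + μ| ≤ (c + |μ|) * (|y| + 1) := by
  calc |c * y + μ| ≤ c * |y| + |μ| := by
        simpa [abs_mul, abs_of_nonneg hc] using abs_add_le (c * y) μ
    _ ≤ (c + |μ|) * (|y| + 1) := by nlinarith [abs_nonneg y, abs_nonneg μ]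

lemma integral_pow_gaussianReal_le (μ : ℝ) (v : ℝ≥0) (j : ℕ) :
    ∫ x, x ^ j ∂gaussianReal μ v
      ≤ (√v + |μ|) ^ j * ∫ y, (|y| + 1) ^ j ∂gaussianReal 0 1 := by
  have haffine : Measurable fun y : ℝ => √v * y + μ := by fun_prop
  have hint := integrable_pow_gaussianReal μ v j
  rw [gaussianReal_eq_map_std μ v] at hint ⊢
  rw [integrable_map_measure (by fun_prop) haffine.aemeasurable] at hint
  rw [integral_map haffine.aemeasurable (by fun_prop), ← integral_const_mul]
  refine integral_mono hint ((integrable_abs_add_one_pow_gaussianReal 0 1 j).const_mul _)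
    fun y => ?_
  calc (√v * y + μ) ^ j ≤ |√v * y + μ| ^ j := by rw [← abs_pow]; exact le_abs_self _
    _ ≤ ((√v + |μ|) * (|y| + 1)) ^ j :=
        pow_le_pow_left₀ (abs_nonneg _) (abs_mul_add_le_mul_abs_add_one _ _ _ (sqrt_nonneg _)) j
    _ = _ := mul_pow _ _ _

lemma setIntegral_sq_le_of_lt_abs {ν : Measure ℝ} {η : ℝ} (hη : 0 < η) (p : ℕ)
    (hint : Integrable (fun x : ℝ => x ^ (2 * (p + 1))) ν) :
    ∫ x in {x : ℝ | η < |x|}, x ^ 2 ∂ν ≤ (∫ x, x ^ (2 * (p + 1)) ∂ν) / η ^ (2 * p) := by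
  have hS : MeasurableSet {x : ℝ | η < |x|} := measurableSet_lt measurable_const measurable_abs
  have hηp : 0 < η ^ (2 * p) := by positivity
  rw [← integral_div]
  calc ∫ x in {x : ℝ | η < |x|}, x ^ 2 ∂ν
      ≤ ∫ x in {x : ℝ | η < |x|}, x ^ (2 * (p + 1)) / η ^ (2 * p) ∂ν := by
        refine integral_mono_of_nonneg (ae_of_all _ fun x => sq_nonneg x)
          (hint.div_const _).integrableOn (ae_restrict_of_forall_mem hS fun x hx => ?_)
        have hηx : η ^ (2 * p) ≤ x ^ (2 * p) := by
          rw [pow_mul, pow_mul, ← sq_abs x]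
          exact pow_le_pow_left₀ (by positivity) (pow_le_pow_left₀ hη.le (le_of_lt hx) 2) p
        rw [le_div_iff₀ hηp]
        calc x ^ 2 * η ^ (2 * p) ≤ x ^ 2 * x ^ (2 * p) := by gcongr
          _ = x ^ (2 * (p + 1)) := by ring
    _ ≤ ∫ x, x ^ (2 * (p + 1)) / η ^ (2 * p) ∂ν :=
        setIntegral_le_integral (hint.div_const _)
          (ae_of_all _ fun x => div_nonneg ((even_two_mul _).pow_nonneg x) hηp.le)

lemma sqrt_toNNReal_div_add_abs_div_le (a b : ℝ) {x : ℝ} (hx : 1 ≤ x) :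
    √((b / x).toNNReal : ℝ) + |a / x| ≤ (√b + |a|) / √x := by
  have hx0 : 0 < x := one_pos.trans_le hx
  have hsqrt : √((b / x).toNNReal : ℝ) = √b / √x := by
    rw [show √((b / x).toNNReal : ℝ) = √(b / x) by simp only [Real.sqrt, Real.toNNReal_coe],
      sqrt_div' b hx0.le]
  have hmean : |a / x| ≤ |a| / √x := by
    rw [abs_div, abs_of_pos hx0]
    exact div_le_div_of_nonneg_left (abs_nonneg a) (sqrt_pos.2 hx0) (by simp [hx])
  rw [hsqrt, add_div]
  exact add_le_add_right hmean _

lemma integral_pow_gaussianReal_div_le (a b : ℝ) (q : ℕ) {x : ℝ} (hx : 1 ≤ x) :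
    ∫ z, z ^ (2 * q) ∂gaussianReal (a / x) (b / x).toNNReal
      ≤ (√b + |a|) ^ (2 * q) * (∫ y, (|y| + 1) ^ (2 * q) ∂gaussianReal 0 1) / x ^ q := by
  have hx0 : 0 < x := one_pos.trans_le hx
  calc ∫ z, z ^ (2 * q) ∂gaussianReal (a / x) (b / x).toNNReal
      ≤ (√((b / x).toNNReal : ℝ) + |a / x|) ^ (2 * q) *
          ∫ y, (|y| + 1) ^ (2 * q) ∂gaussianReal 0 1 := integral_pow_gaussianReal_le _ _ _
    _ ≤ ((√b + |a|) / √x) ^ (2 * q) * ∫ y, (|y| + 1) ^ (2 * q) ∂gaussianReal 0 1 := by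
        gcongr
        exact sqrt_toNNReal_div_add_abs_div_le a b hx
    _ = _ := by rw [div_pow, pow_mul (√x), sq_sqrt hx0.le]; ring

lemma setIntegral_sq_gaussianReal_div_le (a b m w : ℝ) (hm : 0 < m) (p : ℕ) {x : ℝ}
    (hx : 1 ≤ x) :
    ∫ z in {z : ℝ | m * x ^ (-w) < |z|}, z ^ 2 ∂gaussianReal (a / x) (b / x).toNNReal
      ≤ (√b + |a|) ^ (2 * (p + 1)) * (∫ y, (|y| + 1) ^ (2 * (p + 1)) ∂gaussianReal 0 1)
          / m ^ (2 * p) * x ^ (2 * p * w - (p + 1)) := by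
  have hx0 : 0 < x := one_pos.trans_le hx
  have hthreshold : (m * x ^ (-w)) ^ (2 * p) = m ^ (2 * p) * (x ^ (2 * p * w))⁻¹ := by
    rw [mul_pow, ← rpow_natCast (x ^ (-w)), ← rpow_mul hx0.le, ← rpow_neg hx0.le]
    push_cast
    ring_nf
  calc ∫ z in {z : ℝ | m * x ^ (-w) < |z|}, z ^ 2 ∂gaussianReal (a / x) (b / x).toNNReal
      ≤ (∫ z, z ^ (2 * (p + 1)) ∂gaussianReal (a / x) (b / x).toNNReal)
          / (m * x ^ (-w)) ^ (2 * p) :=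
        setIntegral_sq_le_of_lt_abs (by positivity) p (integrable_pow_gaussianReal _ _ _)
    _ ≤ (√b + |a|) ^ (2 * (p + 1)) * (∫ y, (|y| + 1) ^ (2 * (p + 1)) ∂gaussianReal 0 1)
          / x ^ (p + 1) / (m * x ^ (-w)) ^ (2 * p) := by
        gcongr
        exact integral_pow_gaussianReal_div_le a b (p + 1) hx
    _ = _ := by
        rw [hthreshold, rpow_sub hx0, ← rpow_natCast x (p + 1)]
        push_cast
        field_simp

theorem no_jump_truncated_second_moment_general
    (T β θ m w : ℝ) (hm : 0 < m)
    (hw : w ∈ Set.Ioo (0 : ℝ) (1 / 2)) :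
    (∀ k : ℕ, Tendsto (fun n : ℕ => (n : ℝ) ^ k *
        ∫ x in {x : ℝ | m * (n : ℝ) ^ (-w) < |x|}, x ^ 2
          ∂(gaussianReal (β * T / n) (Real.toNNReal (θ * T / n))))
      atTop (nhds 0)) ∧
    ∀ K : ℕ, Tendsto (fun n : ℕ => Real.sqrt n * (((n : ℝ) - K) *
        ∫ x in {x : ℝ | m * (n : ℝ) ^ (-w) < |x|}, x ^ 2
          ∂(gaussianReal (β * T / n) (Real.toNNReal (θ * T / n)))))
      atTop (nhds 0) := by
  set I : ℕ → ℝ := fun n => ∫ x in {x : ℝ | m * (n : ℝ) ^ (-w) < |x|}, x ^ 2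
    ∂(gaussianReal (β * T / n) (Real.toNNReal (θ * T / n)))
  have hI_nonneg (n : ℕ) : 0 ≤ I n :=
    setIntegral_nonneg (measurableSet_lt measurable_const measurable_abs) fun x _ => sq_nonneg x
  have hdecay (k : ℕ) : Tendsto (fun n : ℕ => (n : ℝ) ^ k * I n) atTop (nhds 0) := by
    obtain ⟨p, hp⟩ := exists_nat_gt (k / (1 - 2 * w))
    have hr : k + (2 * p * w - (p + 1)) < 0 := by
      have := (div_lt_iff₀ (by linarith [hw.2] : (0 : ℝ) < 1 - 2 * w)).1 hp
      linarith
    set A := (√(θ * T) + |β * T|) ^ (2 * (p + 1)) *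
      (∫ y, (|y| + 1) ^ (2 * (p + 1)) ∂gaussianReal 0 1) / m ^ (2 * p)
    have hbound : ∀ᶠ n : ℕ in atTop,
        (n : ℝ) ^ k * I n ≤ A * (n : ℝ) ^ (k + (2 * p * w - (p + 1))) := by
      filter_upwards [eventually_ge_atTop 1] with n hn
      have hn' : (1 : ℝ) ≤ n := by exact_mod_cast hn
      rw [rpow_add (one_pos.trans_le hn'), rpow_natCast, mul_left_comm]
      gcongr
      exact setIntegral_sq_gaussianReal_div_le _ _ m w hm p hn'
    have hlim :
        Tendsto (fun n : ℕ => A * (n : ℝ) ^ (k + (2 * p * w - (p + 1)))) atTop (nhds 0) := by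
      simpa using ((tendsto_rpow_neg_atTop (neg_pos.2 hr)).comp
        tendsto_natCast_atTop_atTop).const_mul A
    exact squeeze_zero' (.of_forall fun n => by have := hI_nonneg n; positivity) hbound hlim
  refine ⟨hdecay, fun K => squeeze_zero_norm' ?_ (hdecay 2)⟩
  filter_upwards [eventually_ge_atTop K, eventually_ge_atTop 1] with n hnK hn1
  have hn1' : (1 : ℝ) ≤ n := by exact_mod_cast hn1
  have hnK' : (K : ℝ) ≤ n := by exact_mod_cast hnK
  have hsqrt : √(n : ℝ) ≤ n := by simp [hn1']
  rw [norm_mul, norm_mul, Real.norm_of_nonneg (sqrt_nonneg _),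
    Real.norm_of_nonneg (sub_nonneg.2 hnK'), Real.norm_of_nonneg (hI_nonneg n), ← mul_assoc, sq]
  gcongr
  linarith [(K.cast_nonneg : (0 : ℝ) ≤ K)]

/-- **Truncated second-moment bound for no-jump increments.**
For `Z_n ~ N(β T/n, θ T/n)` and threshold `η_n = m n^{-w}` with `0 < w < 1/2`,
`E[Z_n² 1(|Z_n| > η_n)]` vanishes faster than any polynomial rate: for every `k`,
`n^k E[Z_n² 1(|Z_n| > η_n)] → 0`.  In particular the total contribution of the
`n − K` no-jump increments is `o(n^{-1/2})`. -/
theorem no_jump_truncated_second_moment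
    (T β θ m w : ℝ) (hT : 0 < T) (hθ : 0 < θ) (hm : 0 < m)
    (hw : w ∈ Set.Ioo (0 : ℝ) (1 / 2)) :
    (∀ k : ℕ, Tendsto (fun n : ℕ => (n : ℝ) ^ k *
        ∫ x in {x : ℝ | m * (n : ℝ) ^ (-w) < |x|}, x ^ 2
          ∂(gaussianReal (β * T / n) (Real.toNNReal (θ * T / n))))
      atTop (nhds 0)) ∧
    ∀ K : ℕ, Tendsto (fun n : ℕ => Real.sqrt n * (((n : ℝ) - K) *
        ∫ x in {x : ℝ | m * (n : ℝ) ^ (-w) < |x|}, x ^ 2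
          ∂(gaussianReal (β * T / n) (Real.toNNReal (θ * T / n)))))
      atTop (nhds 0) :=
  no_jump_truncated_second_moment_general T β θ m w hm hw
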